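/- Let q be a prime power with q ≥ 4, let l ≥ 1, let a_1, ..., a_l be distinct elements of F_q, let D = F_q \ {a_1, ..., a_l}, and let 2 ≤ k ≤ q - l - 1. Fix j with 1 ≤ j ≤ l and set f_j(x) = (x - a_j)^{q-2}. Then the maximum, over all polynomials h ∈ F_q[x] of degree at most k-1, of the number of points y ∈ D with f_j(y) = h(y), equals exactly k. -/

import Mathlib

/-!
On `D` the function `f_j` is `y ↦ (y - a_j)⁻¹`, so `f_j(y) = h(y)` says that `y` is a root of
`(X - a_j) h - 1`. This polynomial has degree at most `k` and is nonzero (it is `-1` at `a_j`),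
hence at most `k` agreements. Conversely, Lagrange interpolation through any `k` points of `D`,
which has at least `q - l > k` elements, gives an `h` of degree `< k` with exactly `k` agreements.
-/

open Polynomial

theorem FiniteField.pow_card_sub_two_eq_inv {K : Type*} [Field K] [Fintype K] {x : K}
    (hx : x ≠ 0) : x ^ (Fintype.card K - 2) = x⁻¹ := by
  have h2 : 2 ≤ Fintype.card K := Fintype.one_lt_card
  refine eq_inv_of_mul_eq_one_left ?_
  rw [← pow_succ, show Fintype.card K - 2 + 1 = Fintype.card K - 1 by omega]
  exact FiniteField.pow_card_sub_one_eq_one x hx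

section Agreements

variable {F : Type*} [Field F]

theorem inv_sub_eq_eval_iff_isRoot {c y : F} (hy : y ≠ c) (h : F[X]) :
    (y - c)⁻¹ = h.eval y ↔ ((X - C c) * h - 1).IsRoot y := by
  have hyc : y - c ≠ 0 := sub_ne_zero.mpr hy
  simp only [IsRoot, eval_sub, eval_mul, eval_X, eval_C, eval_one, sub_eq_zero]
  exact ⟨fun he => he ▸ mul_inv_cancel₀ hyc, fun he => (eq_inv_of_mul_eq_one_right he).symm⟩

theorem natDegree_X_sub_C_mul_sub_one_le {k : ℕ} (c : F) {h : F[X]} (hh : h.degree < k) :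
    ((X - C c) * h - 1).natDegree ≤ k := by
  rcases eq_or_ne h 0 with rfl | h0
  · simp
  have hlt : h.natDegree < k := (natDegree_lt_iff_degree_lt h0).mpr hh
  calc ((X - C c) * h - 1).natDegree ≤ ((X - C c) * h).natDegree := by
        rw [natDegree_sub_eq_left_of_natDegree_lt]; simp [natDegree_mul (X_sub_C_ne_zero c) h0]
    _ ≤ (X - C c).natDegree + h.natDegree := natDegree_mul_le
    _ ≤ k := by rw [natDegree_X_sub_C]; omega

theorem card_filter_inv_sub_eq_eval_le [DecidableEq F] {c : F} {s : Finset F} (hc : c ∉ s)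
    {k : ℕ} {h : F[X]} (hh : h.degree < k) :
    (s.filter fun y => (y - c)⁻¹ = h.eval y).card ≤ k := by
  set P : F[X] := (X - C c) * h - 1
  have hP : P ≠ 0 := fun h0 => by simpa [P] using congrArg (eval c) h0
  refine (card_le_degree_of_subset_roots fun y hy => ?_).trans
    (natDegree_X_sub_C_mul_sub_one_le c hh)
  obtain ⟨hys, hyh⟩ := Finset.mem_filter.mp hy
  exact (mem_roots hP).mpr ((inv_sub_eq_eval_iff_isRoot (ne_of_mem_of_not_mem hys hc) h).mp hyh)

theorem exists_degree_lt_le_card_filter_eval_eq [DecidableEq F] (r : F → F) {s : Finset F}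
    {k : ℕ} (hk : k ≤ s.card) :
    ∃ h : F[X], h.degree < k ∧ k ≤ (s.filter fun y => r y = h.eval y).card := by
  obtain ⟨t, hts, rfl⟩ := Finset.exists_subset_card_eq hk
  have hinj : Set.InjOn id (t : Set F) := Function.injective_id.injOn
  refine ⟨Lagrange.interpolate t id r, Lagrange.degree_interpolate_lt r hinj,
    Finset.card_le_card fun y hy => Finset.mem_filter.mpr ⟨hts hy, ?_⟩⟩
  exact (Lagrange.eval_interpolate_at_node r hinj hy).symm

end Agreements

theorem max_agreements_eq_k_general {F : Type*} [Field F] [Fintype F] [DecidableEq F]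
    (q l k : ℕ) (hq : q = Fintype.card F)
    (a : Fin l → F)
    (D : Finset F) (hD : D = Finset.univ \ Finset.image a Finset.univ)
    (hk : k ≤ q - l - 1) (j : Fin l) :
    sSup {m : ℕ | ∃ h : F[X], h.degree < (k : ℕ) ∧
        m = (D.filter (fun y => ((X - C (a j)) ^ (q - 2)).eval y = h.eval y)).card}
      = k := by
  have hj : a j ∉ D := by simp [hD]
  have hkD : k ≤ D.card := by
    have hsdiff := Finset.le_card_sdiff (Finset.image a Finset.univ) Finset.univ
    have himage : (Finset.image a Finset.univ).card ≤ l :=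
      Finset.card_image_le.trans_eq (Finset.card_fin l)
    rw [Finset.card_univ, ← hq] at hsdiff
    rw [hD]
    omega
  have hfilter : ∀ h : F[X], D.filter (fun y => ((X - C (a j)) ^ (q - 2)).eval y = h.eval y) =
      D.filter (fun y => (y - a j)⁻¹ = h.eval y) := fun h => Finset.filter_congr fun y hy => by
    rw [eval_pow, eval_sub, eval_X, eval_C, hq,
      FiniteField.pow_card_sub_two_eq_inv (sub_ne_zero.mpr (ne_of_mem_of_not_mem hy hj))]
  simp only [hfilter]
  refine IsGreatest.csSup_eq ⟨?_, ?_⟩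
  · obtain ⟨h, hh, hle⟩ :=
      exists_degree_lt_le_card_filter_eval_eq (fun y => (y - a j)⁻¹) hkD
    exact ⟨h, hh, le_antisymm hle (card_filter_inv_sub_eq_eval_le hj hh)⟩
  · rintro m ⟨h, hh, rfl⟩
    exact card_filter_inv_sub_eq_eval_le hj hh

/-- With `D = F_q \ {a_1, ..., a_l}`, `2 ≤ k ≤ q - l - 1` and
`f_j(x) = (x - a_j)^(q-2)`, the maximum over polynomials `h` of degree at most
`k - 1` of the number of points `y ∈ D` with `f_j(y) = h(y)` equals `k`. -/
theorem max_agreements_eq_k {F : Type*} [Field F] [Fintype F] [DecidableEq F]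
    (q l k : ℕ) (hq : q = Fintype.card F) (hq4 : 4 ≤ q) (hl : 1 ≤ l)
    (a : Fin l → F) (ha : Function.Injective a)
    (D : Finset F) (hD : D = Finset.univ \ Finset.image a Finset.univ)
    (hk2 : 2 ≤ k) (hk : k ≤ q - l - 1) (j : Fin l) :
    sSup {m : ℕ | ∃ h : F[X], h.degree < (k : ℕ) ∧
        m = (D.filter (fun y => ((X - C (a j)) ^ (q - 2)).eval y = h.eval y)).card}
      = k :=
  max_agreements_eq_k_general q l k hq a D hD hk j
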